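/- arXiv:1709.06333 — 4 statements merged into one kernel-verified Lean document; each statement's English description precedes it below -/
import Mathlib

section
/- Let f ∈ C^∞((0,∞)) be non-negative and suppose that f and all its iterated derivatives f^{(n)} are of exponential order (for each n there exist M, a > 0 with |f^{(n)}(t)| ≤ M e^{at} for all t > 0) and admit Laplace transforms, i.e. t ↦ e^{−λt} f^{(n)}(t) is integrable on (0,∞) for all sufficiently large λ. Let f̃(λ) = ∫₀^∞ e^{−λt} f(t) dt. Then f is rapidly decreasing at 0⁺ if and only if for every α > 0, lim_{λ→∞} λ^α f̃(λ) = 0. -/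
open Filter Topology Set MeasureTheory

lemma aux_integrable {α l : ℝ} (hα : 0 < α) (hl : 0 < l) :
    IntegrableOn (fun t => t ^ α * Real.exp (-(l * t))) (Ioi (0:ℝ)) := by
  have h1 : IntegrableOn (fun x : ℝ => Real.exp (-x) * x ^ (α + 1 - 1)) (Ioi 0) :=
    Real.GammaIntegral_convergent (by linarith)
  have h2 : IntegrableOn (fun x : ℝ => Real.exp (-(l * x)) * (l * x) ^ (α + 1 - 1)) (Ioi 0) := by
    have := (integrableOn_Ioi_comp_mul_left_iff
      (fun x : ℝ => Real.exp (-x) * x ^ (α + 1 - 1)) 0 hl).mpr (by simpa using h1)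
    simpa using this
  have h3 := h2.const_mul ((l : ℝ) ^ α)⁻¹
  apply IntegrableOn.congr_fun h3 ?_ measurableSet_Ioi
  intro x hx
  have hx0 : (0:ℝ) < x := hx
  simp only [show α + 1 - 1 = α by ring, Real.mul_rpow hl.le hx0.le]
  field_simp

lemma aux_integral {α l : ℝ} (hα : 0 < α) (hl : 0 < l) :
    ∫ t in Ioi (0:ℝ), t ^ α * Real.exp (-(l * t)) = (1 / l) ^ (α + 1) * Real.Gamma (α + 1) := by
  have := Real.integral_rpow_mul_exp_neg_mul_Ioi (a := α + 1) (r := l) (by linarith) hl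
  simpa [show α + 1 - 1 = α by ring] using this

set_option maxHeartbeats 1600000 in
/-- Tauberian lemma for rapidly decaying functions: let `f ∈ C^∞((0,∞))` be non-negative,
with `f` and all its derivatives of exponential order and admitting Laplace transforms.
Then `f` is rapidly decreasing at `0⁺` if and only if `λ^α · f̃(λ) → 0` as `λ → ∞`
for every `α > 0`, where `f̃(λ) = ∫₀^∞ e^{-λt} f(t) dt`. -/
theorem rapidly_decreasing_iff_laplace_rapid_decay
    (f : ℝ → ℝ)
    (hf_nonneg : ∀ t ∈ Ioi (0:ℝ), 0 ≤ f t)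
    (hf : ContDiffOn ℝ (⊤ : ℕ∞) f (Ioi 0))
    (hexp : ∀ n : ℕ, ∃ M a : ℝ, 0 < M ∧ 0 < a ∧
      ∀ t ∈ Ioi (0:ℝ), |iteratedDerivWithin n f (Ioi 0) t| ≤ M * Real.exp (a * t))
    (hlap : ∀ n : ℕ, ∃ Λ : ℝ, ∀ l : ℝ, Λ ≤ l →
      IntegrableOn (fun t => Real.exp (-(l * t)) * iteratedDerivWithin n f (Ioi 0) t)
        (Ioi 0)) :
    (∀ α > (0:ℝ), Tendsto (fun t => f t / t ^ α) (𝓝[>] 0) (𝓝 0)) ↔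
      (∀ α > (0:ℝ),
        Tendsto (fun l : ℝ => l ^ α * ∫ t in Ioi (0:ℝ), Real.exp (-(l * t)) * f t)
          atTop (𝓝 0)) := by
  obtain ⟨Λ₀, hΛ₀⟩ := hlap 0
  have hlap0 : ∀ l : ℝ, Λ₀ ≤ l →
      IntegrableOn (fun t => Real.exp (-(l * t)) * f t) (Ioi 0) := by
    intro l hl
    have := hΛ₀ l hl
    simpa [iteratedDerivWithin_zero] using this
  have hF_nonneg : ∀ l : ℝ, 0 ≤ ∫ t in Ioi (0:ℝ), Real.exp (-(l * t)) * f t := fun l =>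
    setIntegral_nonneg measurableSet_Ioi fun t ht =>
      mul_nonneg (Real.exp_nonneg _) (hf_nonneg t ht)
  constructor
  · -- forward direction
    intro H α hα
    obtain ⟨M, a, hM, ha, hb⟩ := hexp 0
    have hb' : ∀ t ∈ Ioi (0:ℝ), f t ≤ M * Real.exp (a * t) := by
      intro t ht
      have := hb t ht
      rw [iteratedDerivWithin_zero] at this
      exact (abs_le.mp this).2
    have h1 := H α hα
    rw [Metric.tendsto_nhdsWithin_nhds] at h1
    obtain ⟨δ, hδ, hδ'⟩ := h1 1 one_pos
    set c := δ / 2 with hc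
    have hc0 : 0 < c := by positivity
    have hfle : ∀ t ∈ Ioc (0:ℝ) c, f t ≤ t ^ α := by
      intro t ht
      have htpos : 0 < t := ht.1
      have hdist : dist t 0 < δ := by
        rw [Real.dist_eq, sub_zero, abs_of_pos htpos]
        have := ht.2
        simp only [hc] at this ⊢
        linarith
      have h2 := hδ' (Set.mem_Ioi.mpr htpos) hdist
      rw [Real.dist_eq, sub_zero] at h2
      have h3 : f t / t ^ α < 1 := (le_abs_self _).trans_lt h2
      have h4 : (0:ℝ) < t ^ α := Real.rpow_pos_of_pos htpos α
      calc f t = f t / t ^ α * t ^ α := by field_simp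
        _ ≤ 1 * t ^ α := mul_le_mul_of_nonneg_right h3.le h4.le
        _ = t ^ α := one_mul _
    have hG : Tendsto (fun l : ℝ => Real.Gamma (α + 1) / l
        + M * Real.exp (a * c) * (l ^ α * Real.exp (-c * l))) atTop (𝓝 0) := by
      have t1 : Tendsto (fun l : ℝ => Real.Gamma (α + 1) / l) atTop (𝓝 0) :=
        tendsto_const_nhds.div_atTop tendsto_id
      have t2 := (tendsto_rpow_mul_exp_neg_mul_atTop_nhds_zero α c hc0).const_mul
        (M * Real.exp (a * c))
      simpa using t1.add t2
    apply tendsto_of_tendsto_of_tendsto_of_le_of_le' tendsto_const_nhds hG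
    · filter_upwards [eventually_ge_atTop (1:ℝ)] with l hl
      exact mul_nonneg (Real.rpow_nonneg (by linarith) α) (hF_nonneg l)
    · filter_upwards [eventually_ge_atTop (1:ℝ), eventually_ge_atTop Λ₀,
        eventually_ge_atTop (a + 1)] with l hl1 hlΛ hla
      have hl0 : (0:ℝ) < l := by linarith
      have hint := hlap0 l hlΛ
      have hsplit : (∫ t in Ioi (0:ℝ), Real.exp (-(l * t)) * f t)
          = (∫ t in Ioc (0:ℝ) c, Real.exp (-(l * t)) * f t)
            + ∫ t in Ioi c, Real.exp (-(l * t)) * f t := by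
        rw [← setIntegral_union (Ioc_disjoint_Ioi le_rfl) measurableSet_Ioi
          (hint.mono_set Ioc_subset_Ioi_self) (hint.mono_set (Ioi_subset_Ioi hc0.le)),
          Ioc_union_Ioi_eq_Ioi hc0.le]
      have hB1 : (∫ t in Ioc (0:ℝ) c, Real.exp (-(l * t)) * f t)
          ≤ (1 / l) ^ (α + 1) * Real.Gamma (α + 1) := by
        have e1 : (∫ t in Ioc (0:ℝ) c, Real.exp (-(l * t)) * f t)
            ≤ ∫ t in Ioc (0:ℝ) c, t ^ α * Real.exp (-(l * t)) := by
          apply setIntegral_mono_on (hint.mono_set Ioc_subset_Ioi_self)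
            ((aux_integrable hα hl0).mono_set Ioc_subset_Ioi_self) measurableSet_Ioc
          intro t ht
          rw [mul_comm (t ^ α)]
          exact mul_le_mul_of_nonneg_left (hfle t ht) (Real.exp_nonneg _)
        have e2 : (∫ t in Ioc (0:ℝ) c, t ^ α * Real.exp (-(l * t)))
            ≤ ∫ t in Ioi (0:ℝ), t ^ α * Real.exp (-(l * t)) := by
          apply setIntegral_mono_set (aux_integrable hα hl0)
          · exact (ae_restrict_iff' measurableSet_Ioi).mpr (ae_of_all _ fun x hx =>
              mul_nonneg (Real.rpow_nonneg (le_of_lt hx) _) (Real.exp_nonneg _))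
          · exact HasSubset.Subset.eventuallyLE Ioc_subset_Ioi_self
        rw [← aux_integral hα hl0]
        exact e1.trans e2
      have hB2 : (∫ t in Ioi c, Real.exp (-(l * t)) * f t)
          ≤ M * Real.exp (a * c) * Real.exp (-c * l) := by
        have hmaj : IntegrableOn
            (fun t => M * Real.exp (-(l - a - 1) * c) * Real.exp (-t)) (Ioi c) := by
          apply Integrable.const_mul
          exact (by simpa using exp_neg_integrableOn_Ioi c one_pos : IntegrableOn (fun x => Real.exp (-x)) (Ioi c))
        have e1 : (∫ t in Ioi c, Real.exp (-(l * t)) * f t)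
            ≤ ∫ t in Ioi c, M * Real.exp (-(l - a - 1) * c) * Real.exp (-t) := by
          apply setIntegral_mono_on (hint.mono_set (Ioi_subset_Ioi hc0.le)) hmaj
            measurableSet_Ioi
          intro t ht
          have htc : c < t := ht
          have ht0 : (0:ℝ) < t := lt_trans hc0 htc
          have h4 : Real.exp (-(l * t)) * f t
              ≤ Real.exp (-(l * t)) * (M * Real.exp (a * t)) :=
            mul_le_mul_of_nonneg_left (hb' t ht0) (Real.exp_nonneg _)
          have h5 : Real.exp (-(l * t)) * (M * Real.exp (a * t))
              = M * (Real.exp (-(l - a - 1) * t) * Real.exp (-t)) := by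
            rw [mul_left_comm, ← Real.exp_add, ← Real.exp_add]
            congr 2
            ring
          have h6 : Real.exp (-(l - a - 1) * t) ≤ Real.exp (-(l - a - 1) * c) :=
            Real.exp_le_exp.mpr (by nlinarith)
          calc Real.exp (-(l * t)) * f t
              ≤ M * (Real.exp (-(l - a - 1) * t) * Real.exp (-t)) := by rw [← h5]; exact h4
            _ ≤ M * (Real.exp (-(l - a - 1) * c) * Real.exp (-t)) := by
                apply mul_le_mul_of_nonneg_left _ hM.le
                exact mul_le_mul_of_nonneg_right h6 (Real.exp_nonneg _)
            _ = M * Real.exp (-(l - a - 1) * c) * Real.exp (-t) := by ring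
        have e2 : (∫ t in Ioi c, M * Real.exp (-(l - a - 1) * c) * Real.exp (-t))
            = M * Real.exp (-(l - a - 1) * c) * Real.exp (-c) := by
          rw [integral_const_mul, integral_exp_neg_Ioi]
        have e3 : M * Real.exp (-(l - a - 1) * c) * Real.exp (-c)
            = M * Real.exp (a * c) * Real.exp (-c * l) := by
          rw [mul_assoc, mul_assoc, ← Real.exp_add, ← Real.exp_add]
          congr 2
          ring
        calc (∫ t in Ioi c, Real.exp (-(l * t)) * f t)
            ≤ _ := e1
          _ = _ := e2
          _ = _ := e3
      have hFle : (∫ t in Ioi (0:ℝ), Real.exp (-(l * t)) * f t)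
          ≤ (1 / l) ^ (α + 1) * Real.Gamma (α + 1)
            + M * Real.exp (a * c) * Real.exp (-c * l) := by
        rw [hsplit]; exact add_le_add hB1 hB2
      have hpow : l ^ α * (1 / l) ^ (α + 1) = 1 / l := by
        rw [one_div, Real.inv_rpow hl0.le, ← Real.rpow_neg hl0.le, ← Real.rpow_add hl0,
          show α + -(α + 1) = -1 by ring, Real.rpow_neg_one]
      calc l ^ α * ∫ t in Ioi (0:ℝ), Real.exp (-(l * t)) * f t
          ≤ l ^ α * ((1 / l) ^ (α + 1) * Real.Gamma (α + 1)
            + M * Real.exp (a * c) * Real.exp (-c * l)) :=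
            mul_le_mul_of_nonneg_left hFle (Real.rpow_nonneg hl0.le α)
        _ = Real.Gamma (α + 1) / l
            + M * Real.exp (a * c) * (l ^ α * Real.exp (-c * l)) := by
            rw [mul_add, ← mul_assoc, hpow]
            ring
  · -- backward direction
    intro H α hα
    obtain ⟨M, a, hM, ha, hb⟩ := hexp 1
    set K := M * Real.exp (2 * a) with hKdef
    have hK : 0 < K := by positivity
    have hdiff : ∀ x ∈ Ioi (0:ℝ), HasDerivAt f (iteratedDerivWithin 1 f (Ioi 0) x) x := by
      intro x hx
      have h1 : DifferentiableAt ℝ f x :=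
        (hf.differentiableOn (by simp)).differentiableAt (isOpen_Ioi.mem_nhds hx)
      have h2 : iteratedDerivWithin 1 f (Ioi 0) x = deriv f x := by
        rw [iteratedDerivWithin_one,
          derivWithin_of_isOpen isOpen_Ioi hx]
      rw [h2]; exact h1.hasDerivAt
    have hlip : ∀ x ∈ Ioc (0:ℝ) 2, ∀ y ∈ Ioc (0:ℝ) 2, |f y - f x| ≤ K * |y - x| := by
      intro x hx y hy
      have := (convex_Ioc (0:ℝ) 2).norm_image_sub_le_of_norm_hasDerivWithin_le
        (f' := fun z => iteratedDerivWithin 1 f (Ioi 0) z) (C := K)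
        (fun z hz => (hdiff z (Ioc_subset_Ioi_self hz)).hasDerivWithinAt)
        (fun z hz => by
          rw [Real.norm_eq_abs]
          refine (hb z (Ioc_subset_Ioi_self hz)).trans ?_
          have h3 : Real.exp (a * z) ≤ Real.exp (2 * a) :=
            Real.exp_le_exp.mpr (by nlinarith [hz.1, hz.2])
          rw [hKdef]
          nlinarith) hx hy
      simpa [Real.norm_eq_abs] using this
    set Λ₁ := max Λ₀ 1 with hΛ₁
    have hΛ₁pos : (0:ℝ) < Λ₁ := lt_of_lt_of_le one_pos (le_max_right _ _)
    set t₀ := min 1 Λ₁⁻¹ with ht₀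
    have ht₀pos : 0 < t₀ := lt_min one_pos (by positivity)
    have limA : Tendsto (fun t : ℝ => (t⁻¹) ^ (α + 1)
        * ∫ s in Ioi (0:ℝ), Real.exp (-(t⁻¹ * s)) * f s) (𝓝[>] 0) (𝓝 0) := by
      have := (H (α + 1) (by linarith)).comp tendsto_inv_nhdsGT_zero
      simpa [Function.comp_def] using this
    have limB : Tendsto (fun t : ℝ => (t⁻¹) ^ (2 * α)
        * ∫ s in Ioi (0:ℝ), Real.exp (-(t⁻¹ * s)) * f s) (𝓝[>] 0) (𝓝 0) := by
      have := (H (2 * α) (by linarith)).comp tendsto_inv_nhdsGT_zero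
      simpa [Function.comp_def] using this
    have hRHS : Tendsto (fun t : ℝ =>
        2 * Real.exp 2 * ((t⁻¹) ^ (α + 1) * ∫ s in Ioi (0:ℝ), Real.exp (-(t⁻¹ * s)) * f s)
        + Real.sqrt (4 * K * Real.exp 2
            * ((t⁻¹) ^ (2 * α) * ∫ s in Ioi (0:ℝ), Real.exp (-(t⁻¹ * s)) * f s)))
        (𝓝[>] 0) (𝓝 0) := by
      have l1 := limA.const_mul (2 * Real.exp 2)
      have l2 : Tendsto (fun t : ℝ => Real.sqrt (4 * K * Real.exp 2
          * ((t⁻¹) ^ (2 * α) * ∫ s in Ioi (0:ℝ), Real.exp (-(t⁻¹ * s)) * f s)))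
          (𝓝[>] 0) (𝓝 0) := by
        have h3 := limB.const_mul (4 * K * Real.exp 2)
        have hsqrt : Tendsto Real.sqrt (𝓝 (4 * K * Real.exp 2 * 0)) (𝓝 0) := by
          rw [mul_zero]
          simpa using Real.continuous_sqrt.tendsto 0
        exact hsqrt.comp h3
      simpa using l1.add l2
    apply tendsto_of_tendsto_of_tendsto_of_le_of_le' tendsto_const_nhds hRHS
    · filter_upwards [self_mem_nhdsWithin] with t ht
      exact div_nonneg (hf_nonneg t ht) (Real.rpow_nonneg (le_of_lt ht) α)
    · filter_upwards [Ioo_mem_nhdsGT ht₀pos] with t ht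
      obtain ⟨ht0, htt₀⟩ := ht
      set L := t⁻¹ with hL
      have hL0 : 0 < L := by positivity
      have hLt : L * t = 1 := inv_mul_cancel₀ ht0.ne'
      have ht1 : t < 1 := lt_of_lt_of_le htt₀ (min_le_left _ _)
      have hLΛ : Λ₀ ≤ L := by
        have h1 : t ≤ Λ₁⁻¹ := le_of_lt (lt_of_lt_of_le htt₀ (min_le_right _ _))
        have h2 : Λ₁ * t ≤ 1 := by
          calc Λ₁ * t ≤ Λ₁ * Λ₁⁻¹ := mul_le_mul_of_nonneg_left h1 hΛ₁pos.le
            _ = 1 := mul_inv_cancel₀ hΛ₁pos.ne'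
        have h3 : Λ₁ ≤ L := le_of_mul_le_mul_right (by rw [hLt] at *; linarith) ht0
        exact le_trans (le_max_left _ _) h3
      set F := ∫ s in Ioi (0:ℝ), Real.exp (-(L * s)) * f s with hFdef
      have hFnn : 0 ≤ F := hF_nonneg L
      have htα : (0:ℝ) < t ^ α := Real.rpow_pos_of_pos ht0 α
      have hTerm1_nn : 0 ≤ 2 * Real.exp 2 * (L ^ (α + 1) * F) := by
        apply mul_nonneg (by positivity)
        exact mul_nonneg (Real.rpow_nonneg hL0.le _) hFnn
      have hTerm2_nn : 0 ≤ Real.sqrt (4 * K * Real.exp 2 * (L ^ (2 * α) * F)) :=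
        Real.sqrt_nonneg _
      rcases eq_or_lt_of_le (hf_nonneg t ht0) with hft | hft
      · rw [← hft]
        simp only [zero_div]
        exact add_nonneg hTerm1_nn hTerm2_nn
      · set h := min t (f t / (2 * K)) with hh
        have hh0 : 0 < h := lt_min ht0 (by positivity)
        have hht : h ≤ t := min_le_left _ _
        have hKh : K * h ≤ f t / 2 := by
          have h4 : h ≤ f t / (2 * K) := min_le_right _ _
          calc K * h ≤ K * (f t / (2 * K)) := by nlinarith
            _ = f t / 2 := by field_simp
        have hsub : Icc t (t + h) ⊆ Ioc (0:ℝ) 2 := by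
          intro s hs
          constructor
          · linarith [hs.1]
          · nlinarith [hs.2]
        have hfs : ∀ s ∈ Ioc t (t + h), f t / 2 ≤ f s := by
          intro s hs
          have h1 := hlip t (hsub ⟨le_rfl, by linarith⟩) s (hsub ⟨hs.1.le, hs.2⟩)
          have h2 : |s - t| ≤ h := by
            rw [abs_of_nonneg (by linarith [hs.1.le])]
            linarith [hs.2]
          have h3 : |f s - f t| ≤ K * h := le_trans h1 (by nlinarith [abs_nonneg (s - t)])
          have h4 := (abs_le.mp h3).1
          linarith
        have hIoc_sub : Ioc t (t + h) ⊆ Ioi (0:ℝ) := fun s hs => lt_trans ht0 hs.1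
        have hint := hlap0 L hLΛ
        have e1 : (∫ s in Ioc t (t + h), Real.exp (-(L * s)) * f s) ≤ F := by
          apply setIntegral_mono_set hint
          · exact (ae_restrict_iff' measurableSet_Ioi).mpr (ae_of_all _ fun s hs =>
              mul_nonneg (Real.exp_nonneg _) (hf_nonneg s hs))
          · exact HasSubset.Subset.eventuallyLE hIoc_sub
        have e2 : h * (Real.exp (-(L * (t + h))) * (f t / 2))
            ≤ ∫ s in Ioc t (t + h), Real.exp (-(L * s)) * f s := by
          have h5 := setIntegral_mono_on
            (f := fun _ : ℝ => Real.exp (-(L * (t + h))) * (f t / 2))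
            (g := fun s => Real.exp (-(L * s)) * f s)
            (integrableOn_const measure_Ioc_lt_top.ne)
            (hint.mono_set hIoc_sub) measurableSet_Ioc ?_
          · rw [setIntegral_const, Real.volume_real_Ioc, smul_eq_mul,
              max_eq_left (by linarith)] at h5
            calc h * (Real.exp (-(L * (t + h))) * (f t / 2))
                = (t + h - t) * (Real.exp (-(L * (t + h))) * (f t / 2)) := by ring_nf
              _ ≤ _ := h5
          · intro s hs
            have h6 : Real.exp (-(L * (t + h))) ≤ Real.exp (-(L * s)) :=
              Real.exp_le_exp.mpr (by nlinarith [hs.2])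
            exact mul_le_mul h6 (hfs s hs) (by positivity) (Real.exp_nonneg _)
        have e3 : Real.exp (-2 : ℝ) ≤ Real.exp (-(L * (t + h))) := by
          apply Real.exp_le_exp.mpr
          have h6 : L * h ≤ 1 := by
            calc L * h ≤ L * t := by nlinarith
              _ = 1 := hLt
          have h7 : L * (t + h) = L * t + L * h := by ring
          rw [h7, hLt]
          linarith
        have master : h * (Real.exp (-2 : ℝ) * (f t / 2)) ≤ F := by
          refine le_trans ?_ (le_trans e2 e1)
          have h8 : (0:ℝ) ≤ f t / 2 := by positivity
          exact mul_le_mul_of_nonneg_left (mul_le_mul_of_nonneg_right e3 h8) hh0.le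
        have hexp2 : Real.exp (-2 : ℝ) = (Real.exp 2)⁻¹ := Real.exp_neg 2
        rw [hexp2] at master
        have hE : (0:ℝ) < Real.exp 2 := Real.exp_pos 2
        rcases min_cases t (f t / (2 * K)) with ⟨hmin, _⟩ | ⟨hmin, _⟩
        · -- h = t
          rw [hh, hmin] at master
          have hft' : f t ≤ 2 * Real.exp 2 * (L * F) := by
            have h9 := mul_le_mul_of_nonneg_left master
              (show (0:ℝ) ≤ 2 * Real.exp 2 * t⁻¹ by positivity)
            calc f t = 2 * Real.exp 2 * t⁻¹ * (t * ((Real.exp 2)⁻¹ * (f t / 2))) := by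
                  field_simp
              _ ≤ 2 * Real.exp 2 * t⁻¹ * F := h9
              _ = 2 * Real.exp 2 * (L * F) := by rw [hL]; ring
          have step : f t / t ^ α ≤ 2 * Real.exp 2 * (L * F) / t ^ α :=
            (div_le_div_iff_of_pos_right htα).mpr hft'
          have hpow : 2 * Real.exp 2 * (L * F) / t ^ α
              = 2 * Real.exp 2 * (L ^ (α + 1) * F) := by
            have hLα : L ^ (α + 1) = L * (t ^ α)⁻¹ := by
              rw [Real.rpow_add hL0, Real.rpow_one, hL, Real.inv_rpow ht0.le]
              ring
            rw [div_eq_mul_inv, hLα]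
            ring
          calc f t / t ^ α ≤ 2 * Real.exp 2 * (L * F) / t ^ α := step
            _ = 2 * Real.exp 2 * (L ^ (α + 1) * F) := hpow
            _ ≤ _ := le_add_of_nonneg_right hTerm2_nn
        · -- h = f t / (2K)
          rw [hh, hmin] at master
          have hsq : (f t) ^ 2 ≤ 4 * K * Real.exp 2 * F := by
            have h9 := mul_le_mul_of_nonneg_left master
              (show (0:ℝ) ≤ 4 * K * Real.exp 2 by positivity)
            calc (f t) ^ 2
                = 4 * K * Real.exp 2 * (f t / (2 * K) * ((Real.exp 2)⁻¹ * (f t / 2))) := by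
                  field_simp
                  ring
              _ ≤ 4 * K * Real.exp 2 * F := h9
          have hpow2 : (t ^ α) ^ 2 = t ^ (2 * α) := by
            rw [show (2:ℝ) * α = α * 2 by ring, Real.rpow_mul ht0.le,
              Real.rpow_two]
          have h8 : (f t / t ^ α) ^ 2 ≤ 4 * K * Real.exp 2 * (L ^ (2 * α) * F) := by
            have hLpow : L ^ (2 * α) = (t ^ (2 * α))⁻¹ := by
              rw [hL, Real.inv_rpow ht0.le]
            rw [div_pow, hpow2, hLpow]
            rw [div_le_iff₀ (by positivity : (0:ℝ) < t ^ (2 * α))]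
            calc (f t) ^ 2 ≤ 4 * K * Real.exp 2 * F := hsq
              _ = 4 * K * Real.exp 2 * ((t ^ (2 * α))⁻¹ * F) * t ^ (2 * α) := by
                  field_simp
          have h10 : f t / t ^ α ≤ Real.sqrt (4 * K * Real.exp 2 * (L ^ (2 * α) * F)) := by
            have h11 := Real.sqrt_le_sqrt h8
            rwa [Real.sqrt_sq (by positivity : (0:ℝ) ≤ f t / t ^ α)] at h11
          exact le_trans h10 (le_add_of_nonneg_left hTerm1_nn)
end

section
/- (Technical lemma.) Let C > 0 and let ρ : [0,∞) → [0,∞) be strictly increasing, differentiable on (0,∞), with: (R1) ρ(0) = 0; (R2) lim_{t→0⁺} ρ(t)/t = l₁ for some l₁ > 0; (R3) lim_{t→0⁺} (ρ(t) − l₁ t)/t² = l₂ for some l₂ ∈ ℝ. Define F(t) = ∫₀^{ρ(t)} s^{−3/2} e^{−C/s} ds. Then, with K₂ = C/l₁ and K₁ = l₁^{−1/2} e^{C l₂ / l₁²} / K₂ (both positive), F(t) ∼ K₁ t^{1/2} e^{−K₂/t} as t → 0⁺, i.e. F(t)/(K₁ t^{1/2} e^{−K₂/t}) → 1 as t → 0⁺.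 -/
open Filter Topology Set MeasureTheory

namespace IAZ
noncomputable def fI (C s : ℝ) : ℝ := s ^ (-(3:ℝ)/2) * Real.exp (-(C / s))

lemma exp_neg_le {x : ℝ} (hx : 0 < x) : Real.exp (-x) ≤ 4 / x ^ 2 := by
  have h2 : x / 2 + 1 ≤ Real.exp (x / 2) := Real.add_one_le_exp _
  have h3 : Real.exp x = Real.exp (x / 2) ^ 2 := by
    rw [sq, ← Real.exp_add]; ring_nf
  have h4 : x ^ 2 / 4 ≤ Real.exp x := by nlinarith
  rw [Real.exp_neg]
  have h5 : (0:ℝ) < x ^ 2 / 4 := by positivity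
  calc (Real.exp x)⁻¹ ≤ (x ^ 2 / 4)⁻¹ := inv_anti₀ h5 h4
    _ = 4 / x ^ 2 := by field_simp

lemma rpow_neg_three_halves {r : ℝ} (hr : 0 < r) :
    r ^ (-(3:ℝ)/2) = 1 / (r * Real.sqrt r) := by
  rw [show (-(3:ℝ)/2) = -(1 + 1/2) by ring, Real.rpow_neg hr.le,
    Real.rpow_add hr, Real.rpow_one, ← Real.sqrt_eq_rpow, one_div]

lemma fI_nonneg {C s : ℝ} (hs : 0 ≤ s) : 0 ≤ fI C s := by
  unfold fI; positivity

lemma fI_le {C : ℝ} (hC : 0 < C) {s : ℝ} (hs : 0 < s) :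
    fI C s ≤ 4 * Real.sqrt s / C ^ 2 := by
  have hsq : 0 < Real.sqrt s := Real.sqrt_pos.2 hs
  have hss : Real.sqrt s * Real.sqrt s = s := Real.mul_self_sqrt hs.le
  have h1 : Real.exp (-(C / s)) ≤ 4 / (C / s) ^ 2 := exp_neg_le (div_pos hC hs)
  have h2 : (4 : ℝ) / (C / s) ^ 2 = 4 * s ^ 2 / C ^ 2 := by
    field_simp
  have h3 : fI C s ≤ (1 / (s * Real.sqrt s)) * (4 * s ^ 2 / C ^ 2) := by
    unfold fI
    rw [rpow_neg_three_halves hs]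
    apply mul_le_mul_of_nonneg_left (h2 ▸ h1) (by positivity)
  calc fI C s ≤ (1 / (s * Real.sqrt s)) * (4 * s ^ 2 / C ^ 2) := h3
    _ = 4 * Real.sqrt s / C ^ 2 := by
        rw [div_mul_eq_mul_div, one_mul, div_div, eq_div_iff (by positivity)]
        field_simp
        rw [Real.sq_sqrt hs.le]

lemma measurable_fI (C : ℝ) : Measurable (fI C) := by
  unfold fI; fun_prop

end IAZ

namespace IAZ2
open IAZ

lemma intervalIntegrable_fI {C : ℝ} (hC : 0 < C) {a : ℝ} (ha : 0 ≤ a) :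
    IntervalIntegrable (fI C) volume 0 a := by
  rw [intervalIntegrable_iff, uIoc_of_le ha]
  apply Measure.integrableOn_of_bounded (μ := volume) (M := 4 * Real.sqrt a / C ^ 2)
    (measure_Ioc_lt_top.ne) ((measurable_fI C).aestronglyMeasurable)
  filter_upwards [ae_restrict_mem measurableSet_Ioc] with x hx
  rw [Real.norm_of_nonneg (fI_nonneg hx.1.le)]
  calc fI C x ≤ 4 * Real.sqrt x / C ^ 2 := fI_le hC hx.1
    _ ≤ 4 * Real.sqrt a / C ^ 2 := by
      gcongr
      exact hx.2

noncomputable def HF (C r : ℝ) : ℝ := ∫ s in Ioo 0 r, fI C s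

lemma HF_eq {C r : ℝ} (hr : 0 ≤ r) : HF C r = ∫ s in (0:ℝ)..r, fI C s := by
  rw [intervalIntegral.integral_of_le hr, MeasureTheory.integral_Ioc_eq_integral_Ioo]
  rfl

lemma hasDerivAt_HF {C : ℝ} (hC : 0 < C) {a : ℝ} (ha : 0 < a) :
    HasDerivAt (HF C) (fI C a) a := by
  have h1 : HasDerivAt (fun r => ∫ s in (0:ℝ)..r, fI C s) (fI C a) a := by
    apply intervalIntegral.integral_hasDerivAt_right (intervalIntegrable_fI hC ha.le)
    · exact (measurable_fI C).stronglyMeasurable.stronglyMeasurableAtFilter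
    · apply ContinuousAt.mul
      · exact Real.continuousAt_rpow_const _ _ (Or.inl ha.ne')
      · exact (Real.continuous_exp.continuousAt).comp
          ((continuousAt_const.div continuousAt_id ha.ne').neg)
  apply h1.congr_of_eventuallyEq
  filter_upwards [Ioi_mem_nhds ha] with r hr
  exact HF_eq (le_of_lt hr)

noncomputable def gA (C r : ℝ) : ℝ := Real.sqrt r / C * Real.exp (-(C / r))
noncomputable def gA' (C r : ℝ) : ℝ :=
  1 / (2 * Real.sqrt r) / C * Real.exp (-(C / r)) +
    Real.sqrt r / C * (Real.exp (-(C / r)) * (C / r ^ 2))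

lemma hasDerivAt_gA {C r : ℝ} (hr : 0 < r) :
    HasDerivAt (gA C) (gA' C r) r := by
  have h1 : HasDerivAt (fun x => Real.sqrt x / C) (1 / (2 * Real.sqrt r) / C) r :=
    (Real.hasDerivAt_sqrt hr.ne').div_const C
  have h2 : HasDerivAt (fun x : ℝ => -(C / x)) (C / r ^ 2) r := by
    have h := ((hasDerivAt_inv hr.ne').const_mul C).neg
    simp only [div_eq_mul_inv]
    exact h.congr_deriv (by ring)
  exact h1.mul h2.exp

lemma gA'_pos {C r : ℝ} (hC : 0 < C) (hr : 0 < r) : 0 < gA' C r := by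
  have hsq : 0 < Real.sqrt r := Real.sqrt_pos.2 hr
  unfold gA'
  positivity

lemma ratio_eq {C : ℝ} (hC : 0 < C) {r : ℝ} (hr : 0 < r) :
    fI C r / gA' C r = 2 * C / (2 * C + r) := by
  have hsq : 0 < Real.sqrt r := Real.sqrt_pos.2 hr
  have hss : Real.sqrt r * Real.sqrt r = r := Real.mul_self_sqrt hr.le
  have hE : 0 < Real.exp (-(C / r)) := Real.exp_pos _
  unfold fI gA'
  rw [rpow_neg_three_halves hr,
    div_eq_div_iff (by positivity) (by positivity)]
  have hcube : Real.sqrt r ^ 3 = r * Real.sqrt r := by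
    rw [pow_succ, Real.sq_sqrt hr.le]
  field_simp
  ring_nf
  rw [Real.sq_sqrt hr.le]
  ring

end IAZ2

namespace IAZ3
open IAZ IAZ2

lemma HF_nonneg {C r : ℝ} : 0 ≤ HF C r :=
  setIntegral_nonneg measurableSet_Ioo fun x hx => fI_nonneg hx.1.le

lemma HF_le {C : ℝ} (hC : 0 < C) {r : ℝ} (hr : 0 < r) :
    HF C r ≤ r * (4 * Real.sqrt r / C ^ 2) := by
  have hb : ∀ᵐ (x : ℝ), x ∈ Ioo 0 r → ‖fI C x‖ ≤ 4 * Real.sqrt r / C ^ 2 := by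
    apply Eventually.of_forall
    intro x hx
    rw [Real.norm_of_nonneg (fI_nonneg hx.1.le)]
    calc fI C x ≤ 4 * Real.sqrt x / C ^ 2 := fI_le hC hx.1
      _ ≤ 4 * Real.sqrt r / C ^ 2 := by
        gcongr
        exact hx.2.le
  have h := norm_setIntegral_le_of_norm_le_const_ae' (μ := volume)
    (s := Ioo 0 r) (C := 4 * Real.sqrt r / C ^ 2) measure_Ioo_lt_top
    (f := fI C) hb
  have hv : (volume (Ioo (0:ℝ) r)).toReal = r := by
    rw [Real.volume_Ioo, ENNReal.toReal_ofReal (by linarith)]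
    ring
  calc HF C r ≤ ‖HF C r‖ := le_abs_self _
    _ ≤ 4 * Real.sqrt r / C ^ 2 * (volume (Ioo (0:ℝ) r)).toReal := h
    _ = r * (4 * Real.sqrt r / C ^ 2) := by rw [hv]; ring

lemma tendsto_HF_zero {C : ℝ} (hC : 0 < C) : Tendsto (HF C) (𝓝[>] 0) (𝓝 0) := by
  apply tendsto_of_tendsto_of_tendsto_of_le_of_le' tendsto_const_nhds
    (g := fun _ : ℝ => (0:ℝ)) (h := fun r : ℝ => r * (4 * Real.sqrt r / C ^ 2))
  · have h : Tendsto (fun r : ℝ => r * (4 * Real.sqrt r / C ^ 2)) (𝓝 0)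
        (𝓝 (0 * (4 * Real.sqrt 0 / C ^ 2))) :=
      (continuous_id.mul ((continuous_const.mul Real.continuous_sqrt).div_const _)).tendsto 0
    simpa using h.mono_left nhdsWithin_le_nhds
  · exact Eventually.of_forall fun r => HF_nonneg
  · filter_upwards [self_mem_nhdsWithin] with r hr
    exact HF_le hC hr

lemma gA_pos {C r : ℝ} (hC : 0 < C) (hr : 0 < r) : 0 < gA C r := by
  have hsq : 0 < Real.sqrt r := Real.sqrt_pos.2 hr
  unfold gA; positivity

lemma tendsto_gA_zero {C : ℝ} (hC : 0 < C) : Tendsto (gA C) (𝓝[>] 0) (𝓝 0) := by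
  apply tendsto_of_tendsto_of_tendsto_of_le_of_le' tendsto_const_nhds
    (g := fun _ : ℝ => (0:ℝ)) (h := fun r : ℝ => Real.sqrt r / C)
  · have h : Tendsto (fun r : ℝ => Real.sqrt r / C) (𝓝 0) (𝓝 (Real.sqrt 0 / C)) :=
      (Real.continuous_sqrt.div_const _).tendsto 0
    simpa using h.mono_left nhdsWithin_le_nhds
  · filter_upwards [self_mem_nhdsWithin] with r hr
    exact (gA_pos hC hr).le
  · filter_upwards [self_mem_nhdsWithin] with r hr
    unfold gA
    calc Real.sqrt r / C * Real.exp (-(C / r)) ≤ Real.sqrt r / C * 1 := by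
          apply mul_le_mul_of_nonneg_left _ (by positivity)
          rw [Real.exp_le_one_iff]
          have : 0 < C / r := div_pos hC hr
          linarith
      _ = Real.sqrt r / C := mul_one _

lemma lhopital {C : ℝ} (hC : 0 < C) :
    Tendsto (fun r => HF C r / gA C r) (𝓝[>] 0) (𝓝 1) := by
  apply HasDerivAt.lhopital_zero_nhdsGT (f' := fI C) (g' := gA' C)
  · filter_upwards [self_mem_nhdsWithin] with r hr
    exact hasDerivAt_HF hC hr
  · filter_upwards [self_mem_nhdsWithin] with r hr
    exact hasDerivAt_gA hr
  · filter_upwards [self_mem_nhdsWithin] with r hr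
    exact (gA'_pos hC hr).ne'
  · exact tendsto_HF_zero hC
  · exact tendsto_gA_zero hC
  · apply Tendsto.congr' (f₁ := fun r => 2 * C / (2 * C + r))
    · filter_upwards [self_mem_nhdsWithin] with r hr
      exact (ratio_eq hC hr).symm
    · have h : Tendsto (fun r : ℝ => 2 * C / (2 * C + r)) (𝓝 0) (𝓝 (2 * C / (2 * C + 0))) := by
        apply Tendsto.div tendsto_const_nhds
        · exact (continuous_const.add continuous_id).tendsto 0
        · positivity
      have h2 : 2 * C / (2 * C + 0) = 1 := by
        rw [add_zero]; field_simp
      rw [← h2]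
      exact h.mono_left nhdsWithin_le_nhds

end IAZ3

open IAZ IAZ2 IAZ3 in
theorem integral_asymptotics_at_zero'
    (C : ℝ) (hC : 0 < C) (ρ : ℝ → ℝ)
    (hmono : StrictMonoOn ρ (Ici 0))
    (hρ_nonneg : ∀ t, 0 ≤ t → 0 ≤ ρ t)
    (hdiff : DifferentiableOn ℝ ρ (Ioi 0))
    (hR1 : ρ 0 = 0)
    (l₁ l₂ : ℝ) (hl₁ : 0 < l₁)
    (hR2 : Tendsto (fun t => ρ t / t) (𝓝[>] 0) (𝓝 l₁))
    (hR3 : Tendsto (fun t => (ρ t - l₁ * t) / t ^ 2) (𝓝[>] 0) (𝓝 l₂)) :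
    Tendsto (fun t =>
        (∫ s in Ioo 0 (ρ t), s ^ (-(3:ℝ)/2) * Real.exp (-(C / s))) /
          ((l₁ ^ (-(1:ℝ)/2) * Real.exp (C * l₂ / l₁ ^ 2) / (C / l₁)) *
            Real.sqrt t * Real.exp (-((C / l₁) / t))))
      (𝓝[>] 0) (𝓝 1) := by
  set K₁ := l₁ ^ (-(1:ℝ)/2) * Real.exp (C * l₂ / l₁ ^ 2) / (C / l₁) with hK₁
  have hK₁pos : 0 < K₁ := by
    rw [hK₁]
    have := Real.rpow_pos_of_pos hl₁ (-(1:ℝ)/2)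
    positivity
  have hρpos : ∀ t, 0 < t → 0 < ρ t := fun t ht => by
    have h := hmono self_mem_Ici (mem_Ici.2 ht.le) ht
    rwa [hR1] at h
  have hρ0 : Tendsto ρ (𝓝[>] 0) (𝓝[>] 0) := by
    rw [tendsto_nhdsWithin_iff]
    constructor
    · have hid : Tendsto (fun t : ℝ => t) (𝓝[>] 0) (𝓝 0) :=
        tendsto_id.mono_left nhdsWithin_le_nhds
      have h := hR2.mul hid
      rw [mul_zero] at h
      apply Tendsto.congr' _ h
      filter_upwards [self_mem_nhdsWithin] with t ht
      exact div_mul_cancel₀ (ρ t) (ne_of_gt ht)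
    · filter_upwards [self_mem_nhdsWithin] with t ht
      exact hρpos t ht
  have comp1 : Tendsto (fun t => HF C (ρ t) / gA C (ρ t)) (𝓝[>] 0) (𝓝 1) :=
    (lhopital hC).comp hρ0
  -- exponent function
  set E : ℝ → ℝ := fun t => (ρ t - l₁ * t) / t ^ 2 * (t / ρ t) * (C / l₁) with hE
  have htρ : Tendsto (fun t => t / ρ t) (𝓝[>] 0) (𝓝 l₁⁻¹) := by
    have h := hR2.inv₀ hl₁.ne'
    apply Tendsto.congr' _ h
    filter_upwards [self_mem_nhdsWithin] with t ht
    rw [inv_div]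
  have hEt : Tendsto E (𝓝[>] 0) (𝓝 (l₂ * l₁⁻¹ * (C / l₁))) :=
    (hR3.mul htρ).mul tendsto_const_nhds
  have hsqrt : Tendsto (fun t => Real.sqrt (ρ t / t)) (𝓝[>] 0) (𝓝 (Real.sqrt l₁)) :=
    (Real.continuous_sqrt.continuousAt.tendsto).comp hR2
  have hexp : Tendsto (fun t => Real.exp (E t)) (𝓝[>] 0)
      (𝓝 (Real.exp (l₂ * l₁⁻¹ * (C / l₁)))) :=
    (Real.continuous_exp.continuousAt.tendsto).comp hEt
  have hfac : Tendsto (fun t => Real.sqrt (ρ t / t) * Real.exp (E t) / (C * K₁)) (𝓝[>] 0)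
      (𝓝 (Real.sqrt l₁ * Real.exp (l₂ * l₁⁻¹ * (C / l₁)) / (C * K₁))) :=
    (hsqrt.mul hexp).div_const _
  have hexparg : l₂ * l₁⁻¹ * (C / l₁) = C * l₂ / l₁ ^ 2 := by
    field_simp
  have hCK : C * K₁ = Real.sqrt l₁ * Real.exp (C * l₂ / l₁ ^ 2) := by
    rw [hK₁, Real.sqrt_eq_rpow]
    have h12 : l₁ ^ (-(1:ℝ)/2) * l₁ = l₁ ^ ((1:ℝ)/2) := by
      have := (Real.rpow_add hl₁ (-(1:ℝ)/2) 1).symm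
      rw [Real.rpow_one] at this
      rw [this]
      norm_num
    field_simp
    rw [neg_div] at h12
    linear_combination h12
  have hval : Real.sqrt l₁ * Real.exp (l₂ * l₁⁻¹ * (C / l₁)) / (C * K₁) = 1 := by
    rw [hexparg, hCK, div_self (by positivity)]
  have fac2 : Tendsto (fun t => gA C (ρ t) / (K₁ * Real.sqrt t * Real.exp (-((C / l₁) / t))))
      (𝓝[>] 0) (𝓝 1) := by
    rw [← hval]
    apply Tendsto.congr' _ hfac
    filter_upwards [self_mem_nhdsWithin] with t ht
    have hρt := hρpos t ht
    have hsqt : 0 < Real.sqrt t := Real.sqrt_pos.2 ht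
    have hsqρ : 0 < Real.sqrt (ρ t) := Real.sqrt_pos.2 hρt
    have ht' : (0:ℝ) < t := ht
    have hEeq : E t = (-(C / ρ t)) - (-((C / l₁) / t)) := by
      rw [hE]
      field_simp [ht'.ne', hρt.ne', hl₁.ne']
      ring
    rw [Real.sqrt_div hρt.le, hEeq, Real.exp_sub]
    unfold gA
    have he1 : Real.exp (-(C / ρ t)) ≠ 0 := Real.exp_ne_zero _
    have he2 : Real.exp (-((C / l₁) / t)) ≠ 0 := Real.exp_ne_zero _
    field_simp
  have final := comp1.mul fac2
  rw [mul_one] at final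
  apply Tendsto.congr' _ final
  filter_upwards [self_mem_nhdsWithin] with t ht
  have hρt := hρpos t ht
  have hgA : gA C (ρ t) ≠ 0 := (gA_pos hC hρt).ne'
  show HF C (ρ t) / gA C (ρ t) * (gA C (ρ t) / (K₁ * Real.sqrt t * Real.exp (-((C / l₁) / t))))
      = HF C (ρ t) / (K₁ * Real.sqrt t * Real.exp (-((C / l₁) / t)))
  rw [div_mul_div_comm, mul_comm (HF C (ρ t)) (gA C (ρ t)), mul_div_mul_left _ _ hgA]


/-- Technical lemma: if `C > 0` and `ρ : [0,∞) → [0,∞)` is strictly increasing,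
differentiable on `(0,∞)`, with (R1) `ρ(0)=0`, (R2) `ρ(t)/t → l₁ > 0` as `t → 0⁺`, and
(R3) `(ρ(t) - l₁ t)/t² → l₂` as `t → 0⁺`, then
`F(t) = ∫₀^{ρ(t)} s^{-3/2} e^{-C/s} ds` satisfies `F(t) ∼ K₁ t^{1/2} e^{-K₂/t}` as
`t → 0⁺` where `K₂ = C/l₁` and `K₁ = l₁^{-1/2} e^{C l₂/l₁²} / K₂`. -/
theorem integral_asymptotics_at_zero
    (C : ℝ) (hC : 0 < C) (ρ : ℝ → ℝ)
    (hmono : StrictMonoOn ρ (Ici 0))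
    (hρ_nonneg : ∀ t, 0 ≤ t → 0 ≤ ρ t)
    (hdiff : DifferentiableOn ℝ ρ (Ioi 0))
    (hR1 : ρ 0 = 0)
    (l₁ l₂ : ℝ) (hl₁ : 0 < l₁)
    (hR2 : Tendsto (fun t => ρ t / t) (𝓝[>] 0) (𝓝 l₁))
    (hR3 : Tendsto (fun t => (ρ t - l₁ * t) / t ^ 2) (𝓝[>] 0) (𝓝 l₂)) :
    Tendsto (fun t =>
        (∫ s in Ioo 0 (ρ t), s ^ (-(3:ℝ)/2) * Real.exp (-(C / s))) /
          ((l₁ ^ (-(1:ℝ)/2) * Real.exp (C * l₂ / l₁ ^ 2) / (C / l₁)) *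
            Real.sqrt t * Real.exp (-((C / l₁) / t))))
      (𝓝[>] 0) (𝓝 1) :=
  integral_asymptotics_at_zero' C hC ρ hmono hρ_nonneg hdiff hR1 l₁ l₂ hl₁ hR2 hR3
end

section
/- Let ρ : [0,∞) → [0,∞) be strictly increasing, differentiable on (0,∞), satisfying (R1) ρ(0)=0, (R2) lim_{t→0⁺} ρ(t)/t = l₁ > 0, (R3) lim_{t→0⁺}(ρ(t)−l₁t)/t² = l₂ ∈ ℝ. Let F : [0,δ] → [0,∞) and suppose there are positive constants δ, C₁, C₂, D₁, D₂ such that for all t ∈ [0,δ]: C₁ ∫₀^{ρ(t)} s^{−3/2} e^{−D₁/s} ds ≤ F(t) ≤ C₂ ∫₀^{ρ(t)} s^{−3/2} e^{−D₂/s} ds. Then F is not regularly varying at 0⁺: in fact, for every a > max{1, D₁/D₂}, lim_{t→0⁺} F(at)/F(t) = +∞. -/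
open Filter Topology Set MeasureTheory

lemma exp_neg_le {u : ℝ} (hu : 0 < u) : Real.exp (-u) ≤ 4 / u^2 := by
  have e1 : u/2 + 1 ≤ Real.exp (u/2) := Real.add_one_le_exp _
  have e2 : Real.exp u = Real.exp (u/2) ^ 2 := by
    rw [← Real.exp_nat_mul]; ring_nf
  have e3 : u^2/4 ≤ Real.exp u := by nlinarith [Real.exp_pos (u/2)]
  rw [Real.exp_neg]
  rw [div_eq_mul_inv, show (4:ℝ) * (u^2)⁻¹ = (u^2/4)⁻¹ by field_simp]
  exact inv_anti₀ (by positivity) e3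

lemma ptbd {D s : ℝ} (hD : 0 < D) (hs : 0 < s) :
    s ^ (-(3:ℝ)/2) * Real.exp (-(D/s)) ≤ 1 + 4/D^2 := by
  have h4 : (0:ℝ) ≤ 4/D^2 := by positivity
  rcases le_or_gt 1 s with h | h
  · have h1 : s ^ (-(3:ℝ)/2) ≤ 1 := Real.rpow_le_one_of_one_le_of_nonpos h (by norm_num)
    have h2 : Real.exp (-(D/s)) ≤ 1 := Real.exp_le_one_iff.mpr (by
      simp only [neg_nonpos]; positivity)
    nlinarith [Real.exp_pos (-(D/s)), Real.rpow_nonneg hs.le (-(3:ℝ)/2)]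
  · have h32 : s ^ (-(3:ℝ)/2) ≤ s ^ (-(2:ℝ)) :=
      Real.rpow_le_rpow_of_exponent_ge hs h.le (by norm_num)
    have h2 : s ^ (-(2:ℝ)) = (s^2)⁻¹ := by
      rw [Real.rpow_neg hs.le, show ((2:ℝ)) = ((2:ℕ):ℝ) by norm_num, Real.rpow_natCast]
    have hexp : Real.exp (-(D/s)) ≤ 4 / (D/s)^2 := exp_neg_le (by positivity)
    have key : s ^ (-(2:ℝ)) * Real.exp (-(D/s)) ≤ 4 / D^2 := by
      rw [h2]
      have heq : (s^2)⁻¹ * (4 / (D/s)^2) = 4 / D^2 := by field_simp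
      calc (s^2)⁻¹ * Real.exp (-(D/s)) ≤ (s^2)⁻¹ * (4 / (D/s)^2) :=
            mul_le_mul_of_nonneg_left hexp (by positivity)
        _ = 4 / D^2 := heq
    have := mul_le_mul_of_nonneg_right h32 (Real.exp_pos (-(D/s))).le
    linarith

lemma integ {D x : ℝ} (hD : 0 < D) :
    IntegrableOn (fun s => s ^ (-(3:ℝ)/2) * Real.exp (-(D/s))) (Ioo 0 x) := by
  refine Measure.integrableOn_of_bounded (M := 1 + 4/D^2) measure_Ioo_lt_top.ne ?_ ?_
  · apply Measurable.aestronglyMeasurable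
    fun_prop
  · filter_upwards [ae_restrict_mem measurableSet_Ioo] with s hs
    have hs1 : (0:ℝ) < s := hs.1
    rw [Real.norm_eq_abs, abs_of_nonneg (by positivity)]
    exact ptbd hD hs.1

lemma ftc {D ε x : ℝ} (hD : 0 < D) (hε : 0 < ε) (hεx : ε ≤ x) :
    ∫ s in Ioo ε x, (s^2)⁻¹ * Real.exp (-(D/s))
      = D⁻¹ * Real.exp (-(D/x)) - D⁻¹ * Real.exp (-(D/ε)) := by
  have hIcc : uIcc ε x = Icc ε x := uIcc_of_le hεx
  have key : ∀ s ∈ uIcc ε x, HasDerivAt (fun y => D⁻¹ * Real.exp (-(D/y)))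
      ((s^2)⁻¹ * Real.exp (-(D/s))) s := by
    intro s hs
    rw [hIcc] at hs
    have hs0 : s ≠ 0 := (lt_of_lt_of_le hε hs.1).ne'
    have h1 : HasDerivAt (fun y : ℝ => -(D/y)) (D * (s^2)⁻¹) s := by
      simp only [div_eq_mul_inv]
      have h := ((hasDerivAt_inv hs0).const_mul D).neg
      exact h.congr_deriv (by ring)
    have h2 := (h1.exp).const_mul D⁻¹
    exact h2.congr_deriv (by
      linear_combination (Real.exp (-(D/s)) * (s^2)⁻¹) * inv_mul_cancel₀ hD.ne')
  have cont : ContinuousOn (fun s : ℝ => (s^2)⁻¹ * Real.exp (-(D/s))) (uIcc ε x) := by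
    rw [hIcc]
    have hne : ∀ s ∈ Icc ε x, s ≠ 0 := fun s hs => (lt_of_lt_of_le hε hs.1).ne'
    exact ((continuousOn_id.pow 2).inv₀ (fun s hs => pow_ne_zero _ (hne s hs))).mul
      (Real.continuous_exp.comp_continuousOn
        ((continuousOn_const.div continuousOn_id hne).neg))
  have := intervalIntegral.integral_eq_sub_of_hasDerivAt key (cont.intervalIntegrable)
  rw [← integral_Ioc_eq_integral_Ioo, ← intervalIntegral.integral_of_le hεx, this]

lemma f_eq {s : ℝ} (hs : 0 < s) : s ^ (-(3:ℝ)/2) = Real.sqrt s * (s^2)⁻¹ := by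
  rw [show (-(3:ℝ)/2) = 1/2 + (-2:ℝ) by norm_num, Real.rpow_add hs, Real.sqrt_eq_rpow]
  congr 1
  rw [Real.rpow_neg hs.le, show ((2:ℝ)) = ((2:ℕ):ℝ) by norm_num, Real.rpow_natCast]

lemma int_ub {D x : ℝ} (hD : 0 < D) (hx : 0 < x) :
    ∫ s in Ioo 0 x, s ^ (-(3:ℝ)/2) * Real.exp (-(D/s))
      ≤ Real.sqrt x / D * Real.exp (-(D/x)) := by
  set f : ℝ → ℝ := fun s => s ^ (-(3:ℝ)/2) * Real.exp (-(D/s)) with hf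
  have hint : IntegrableOn f (Ioo 0 x) := integ hD
  set Sn : ℕ → Set ℝ := fun n => Ioo (x / (n+2)) x with hSn
  have hUnion : ⋃ n, Sn n = Ioo 0 x := by
    ext s
    simp only [hSn, mem_iUnion, mem_Ioo]
    constructor
    · rintro ⟨n, h1, h2⟩
      exact ⟨lt_trans (by positivity) h1, h2⟩
    · rintro ⟨h1, h2⟩
      obtain ⟨n, hn⟩ := exists_nat_gt (x / s)
      refine ⟨n, ?_, h2⟩
      rw [div_lt_iff₀ (by positivity)]
      rw [div_lt_iff₀ h1] at hn
      nlinarith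
  have hmonoS : Monotone Sn := by
    intro n m hnm
    apply Ioo_subset_Ioo _ le_rfl
    apply div_le_div_of_nonneg_left hx.le (by positivity)
    have := (Nat.cast_le (α := ℝ)).mpr hnm
    linarith
  have htend := tendsto_setIntegral_of_monotone (μ := volume) (f := f)
    (fun n => measurableSet_Ioo) hmonoS (hUnion ▸ hint)
  rw [hUnion] at htend
  refine le_of_tendsto htend (Eventually.of_forall fun n => ?_)
  set ε : ℝ := x / (n+2) with hεdef
  have hε : 0 < ε := by positivity
  have hεx : ε ≤ x := by
    rw [hεdef, div_le_iff₀ (by positivity)]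
    nlinarith
  set g : ℝ → ℝ := fun s => Real.sqrt x * ((s^2)⁻¹ * Real.exp (-(D/s))) with hg
  have hgint : IntegrableOn g (Ioo ε x) := by
    apply (ContinuousOn.integrableOn_Icc ?_).mono_set Ioo_subset_Icc_self
    have hne : ∀ s ∈ Icc ε x, s ≠ 0 := fun s hs => (lt_of_lt_of_le hε hs.1).ne'
    exact continuousOn_const.mul
      (((continuousOn_id.pow 2).inv₀ (fun s hs => pow_ne_zero _ (hne s hs))).mul
        (Real.continuous_exp.comp_continuousOn
          ((continuousOn_const.div continuousOn_id hne).neg)))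
  have hstep : ∫ s in Sn n, f s ≤ ∫ s in Ioo ε x, g s := by
    apply setIntegral_mono_on (hint.mono_set ?_) hgint measurableSet_Ioo
    · intro s hs
      rw [hf, hg]
      simp only
      rw [f_eq (lt_trans hε hs.1)]
      have h1 : Real.sqrt s ≤ Real.sqrt x := Real.sqrt_le_sqrt hs.2.le
      have h2 : (0:ℝ) < s := lt_trans hε hs.1
      rw [mul_assoc]
      apply mul_le_mul_of_nonneg_right h1 (by positivity)
    · exact Ioo_subset_Ioo hε.le le_rfl
  calc ∫ s in Sn n, f s ≤ ∫ s in Ioo ε x, g s := hstep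
    _ = Real.sqrt x * (D⁻¹ * Real.exp (-(D/x)) - D⁻¹ * Real.exp (-(D/ε))) := by
        rw [hg, integral_const_mul, ftc hD hε hεx]
    _ ≤ Real.sqrt x / D * Real.exp (-(D/x)) := by
        rw [show Real.sqrt x / D = Real.sqrt x * D⁻¹ from div_eq_mul_inv _ _]
        have h1 : (0:ℝ) ≤ Real.sqrt x := Real.sqrt_nonneg x
        have h2 : (0:ℝ) < Real.exp (-(D/ε)) := Real.exp_pos _
        have h3 : (0:ℝ) < D⁻¹ := by positivity
        nlinarith [mul_nonneg (mul_nonneg h1 h3.le) h2.le]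

lemma int_lb {D x : ℝ} (hD : 0 < D) (hx : 0 < x) (hxD : x ≤ D) :
    Real.sqrt x / (4*D) * Real.exp (-(D/x))
      ≤ ∫ s in Ioo 0 x, s ^ (-(3:ℝ)/2) * Real.exp (-(D/s)) := by
  set f : ℝ → ℝ := fun s => s ^ (-(3:ℝ)/2) * Real.exp (-(D/s)) with hf
  have hx2 : (0:ℝ) < x/2 := by positivity
  have hx2x : x/2 ≤ x := by linarith
  have h1 : ∫ s in Ioo (x/2) x, f s ≤ ∫ s in Ioo 0 x, f s := by
    apply setIntegral_mono_set (integ hD) ?_ (HasSubset.Subset.eventuallyLE (Ioo_subset_Ioo hx2.le le_rfl))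
    filter_upwards [ae_restrict_mem measurableSet_Ioo] with s hs
    have hs1 : (0:ℝ) < s := hs.1
    positivity
  set g : ℝ → ℝ := fun s => Real.sqrt (x/2) * ((s^2)⁻¹ * Real.exp (-(D/s))) with hg
  have hgint : IntegrableOn g (Ioo (x/2) x) := by
    apply (ContinuousOn.integrableOn_Icc ?_).mono_set Ioo_subset_Icc_self
    have hne : ∀ s ∈ Icc (x/2) x, s ≠ 0 := fun s hs => (lt_of_lt_of_le hx2 hs.1).ne'
    exact continuousOn_const.mul
      (((continuousOn_id.pow 2).inv₀ (fun s hs => pow_ne_zero _ (hne s hs))).mul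
        (Real.continuous_exp.comp_continuousOn
          ((continuousOn_const.div continuousOn_id hne).neg)))
  have h2 : ∫ s in Ioo (x/2) x, g s ≤ ∫ s in Ioo (x/2) x, f s := by
    apply setIntegral_mono_on hgint
      ((integ hD).mono_set (Ioo_subset_Ioo hx2.le le_rfl)) measurableSet_Ioo
    intro s hs
    have hs0 : (0:ℝ) < s := lt_trans hx2 hs.1
    simp only [hg]
    rw [f_eq hs0]
    have hle : Real.sqrt (x/2) ≤ Real.sqrt s := Real.sqrt_le_sqrt hs.1.le
    rw [mul_assoc]
    exact mul_le_mul_of_nonneg_right hle (by positivity)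
  have h3 : ∫ s in Ioo (x/2) x, g s
      = Real.sqrt (x/2) * (D⁻¹ * Real.exp (-(D/x)) - D⁻¹ * Real.exp (-(D/(x/2)))) := by
    rw [hg, integral_const_mul, ftc hD hx2 hx2x]
  -- numeric estimates
  set E : ℝ := Real.exp (-(D/x)) with hE
  have hEpos : 0 < E := Real.exp_pos _
  have hE2 : Real.exp (-(D/(x/2))) = E^2 := by
    rw [hE, sq, ← Real.exp_add]
    congr 1
    field_simp
    ring
  have hEhalf : E ≤ 1/2 := by
    have hDx : (1:ℝ) ≤ D/x := (one_le_div hx).mpr hxD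
    have : E ≤ Real.exp (-1) := Real.exp_le_exp.mpr (by linarith)
    have h2e : (2:ℝ) ≤ Real.exp 1 := by nlinarith [Real.add_one_le_exp (1:ℝ)]
    have : Real.exp (-1) ≤ 1/2 := by
      rw [Real.exp_neg]
      rw [inv_le_comm₀ (Real.exp_pos 1) (by norm_num)]
      linarith
    linarith
  have hB : Real.sqrt x / 2 ≤ Real.sqrt (x/2) := by
    nlinarith [Real.sq_sqrt hx.le, Real.sq_sqrt hx2.le, Real.sqrt_nonneg x,
      Real.sqrt_nonneg (x/2), sq_nonneg (Real.sqrt x - 2*Real.sqrt (x/2))]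
  have hfinal : Real.sqrt x / (4*D) * E
      ≤ Real.sqrt (x/2) * (D⁻¹ * E - D⁻¹ * E^2) := by
    have hBnn : (0:ℝ) ≤ Real.sqrt (x/2) := Real.sqrt_nonneg _
    have hAnn : (0:ℝ) ≤ Real.sqrt x := Real.sqrt_nonneg _
    have hDi : (0:ℝ) < D⁻¹ := by positivity
    have e1 : E/2 ≤ E - E^2 := by nlinarith
    calc Real.sqrt x / (4*D) * E = (Real.sqrt x / 2) * D⁻¹ * (E/2) := by
          field_simp; ring
      _ ≤ Real.sqrt (x/2) * D⁻¹ * (E - E^2) := by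
          apply mul_le_mul (mul_le_mul_of_nonneg_right hB hDi.le) e1 (by positivity) (by positivity)
      _ = Real.sqrt (x/2) * (D⁻¹ * E - D⁻¹ * E^2) := by ring
  rw [hE2] at h3
  linarith [h1, h2, h3, hfinal]


/-- If `ρ` satisfies (R1)–(R3) and `F` satisfies the two-sided bound
`C₁ ∫₀^{ρ(t)} s^{-3/2} e^{-D₁/s} ds ≤ F(t) ≤ C₂ ∫₀^{ρ(t)} s^{-3/2} e^{-D₂/s} ds`
on `[0,δ]`, then `F` is not regularly varying at `0⁺`: in fact, for every
`a > max 1 (D₁/D₂)`, `F(at)/F(t) → +∞` as `t → 0⁺`. -/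
theorem not_regularly_varying_of_two_sided_bound
    (ρ : ℝ → ℝ)
    (hmono : StrictMonoOn ρ (Ici 0))
    (hρ_nonneg : ∀ t, 0 ≤ t → 0 ≤ ρ t)
    (hdiff : DifferentiableOn ℝ ρ (Ioi 0))
    (hR1 : ρ 0 = 0)
    (l₁ l₂ : ℝ) (hl₁ : 0 < l₁)
    (hR2 : Tendsto (fun t => ρ t / t) (𝓝[>] 0) (𝓝 l₁))
    (hR3 : Tendsto (fun t => (ρ t - l₁ * t) / t ^ 2) (𝓝[>] 0) (𝓝 l₂))
    (F : ℝ → ℝ) (δ C₁ C₂ D₁ D₂ : ℝ)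
    (hδ : 0 < δ) (hC₁ : 0 < C₁) (hC₂ : 0 < C₂) (hD₁ : 0 < D₁) (hD₂ : 0 < D₂)
    (hbound : ∀ t ∈ Icc (0:ℝ) δ,
      C₁ * (∫ s in Ioo 0 (ρ t), s ^ (-(3:ℝ)/2) * Real.exp (-(D₁ / s))) ≤ F t ∧
      F t ≤ C₂ * (∫ s in Ioo 0 (ρ t), s ^ (-(3:ℝ)/2) * Real.exp (-(D₂ / s)))) :
    (¬ ∃ β : ℝ, ∀ a > (0:ℝ),
        Tendsto (fun t => F (a * t) / F t) (𝓝[>] 0) (𝓝 (a ^ β))) ∧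
    (∀ a > max 1 (D₁ / D₂),
        Tendsto (fun t => F (a * t) / F t) (𝓝[>] 0) atTop) := by
  have key : ∀ a > max 1 (D₁ / D₂), Tendsto (fun t => F (a * t) / F t) (𝓝[>] 0) atTop := by
    intro a ha
    have ha1 : (1:ℝ) < a := (le_max_left 1 (D₁/D₂)).trans_lt ha
    have haD : D₁ / D₂ < a := (le_max_right 1 (D₁/D₂)).trans_lt ha
    have ha0 : (0:ℝ) < a := by linarith
    have hD1a : D₁ * a⁻¹ < D₂ := by
      rw [div_lt_iff₀ hD₂] at haD
      rw [← div_lt_iff₀' ?_] at haD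
      · rw [div_eq_mul_inv] at haD; linarith
      · exact ha0
    have hρ_pos : ∀ t > (0:ℝ), 0 < ρ t := by
      intro t ht
      have := hmono (self_mem_Ici) (le_of_lt ht : (0:ℝ) ≤ t) ht
      rwa [hR1] at this
    -- tendsto facts
    have hat : Tendsto (fun t : ℝ => a * t) (𝓝[>] 0) (𝓝[>] 0) := by
      apply tendsto_nhdsWithin_of_tendsto_nhds_of_eventually_within
      · have h : Tendsto (fun t : ℝ => a * t) (𝓝 0) (𝓝 (a * 0)) :=
          (continuous_const.mul continuous_id).tendsto 0
        rw [mul_zero] at h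
        exact h.mono_left nhdsWithin_le_nhds
      · filter_upwards [self_mem_nhdsWithin] with t ht
        exact mul_pos ha0 ht
    have hid0 : Tendsto (fun t : ℝ => t) (𝓝[>] 0) (𝓝 0) :=
      tendsto_id.mono_right nhdsWithin_le_nhds
    have hρat : Tendsto (fun t => ρ (a*t) / (a*t)) (𝓝[>] 0) (𝓝 l₁) := hR2.comp hat
    have hρ0 : Tendsto (fun t => ρ t) (𝓝[>] 0) (𝓝 0) := by
      have h := hR2.mul hid0
      rw [mul_zero] at h
      apply h.congr'
      filter_upwards [self_mem_nhdsWithin] with t ht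
      exact div_mul_cancel₀ _ (ne_of_gt ht)
    have hρa0 : Tendsto (fun t => ρ (a*t)) (𝓝[>] 0) (𝓝 0) := hρ0.comp hat
    have hinv1 : Tendsto (fun t => t / ρ t) (𝓝[>] 0) (𝓝 l₁⁻¹) := by
      have h := hR2.inv₀ (ne_of_gt hl₁)
      exact h.congr (fun t => by rw [inv_div])
    have hinv2 : Tendsto (fun t => t / ρ (a*t)) (𝓝[>] 0) (𝓝 (a⁻¹ * l₁⁻¹)) := by
      have h := (hρat.inv₀ (ne_of_gt hl₁)).const_mul a⁻¹
      apply h.congr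
      intro t
      rw [inv_div, ← mul_div_assoc, inv_mul_cancel_left₀ ha0.ne']
    set L : ℝ := D₂ * l₁⁻¹ - D₁ * (a⁻¹ * l₁⁻¹) with hLdef
    have hLpos : 0 < L := by
      have hinv : 0 < l₁⁻¹ := by positivity
      rw [hLdef]
      nlinarith
    have hh : Tendsto (fun t => D₂ * (t/ρ t) - D₁ * (t/ρ (a*t))) (𝓝[>] 0) (𝓝 L) :=
      (hinv1.const_mul D₂).sub (hinv2.const_mul D₁)
    have hr : Tendsto (fun t => ρ (a*t) / ρ t) (𝓝[>] 0) (𝓝 a) := by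
      have h := (hρat.div hR2 (ne_of_gt hl₁)).const_mul a
      rw [div_self (ne_of_gt hl₁), mul_one] at h
      apply h.congr'
      filter_upwards [self_mem_nhdsWithin] with t ht
      have ht0 : t ≠ 0 := ne_of_gt ht
      have hρtne : ρ t ≠ 0 := (hρ_pos t ht).ne'
      simp only [Pi.div_apply]
      field_simp
    -- eventual facts
    have ev1 : ∀ᶠ t in 𝓝[>] (0:ℝ), 0 < t := self_mem_nhdsWithin
    have evδ1 : ∀ᶠ t in 𝓝[>] (0:ℝ), t ≤ δ := hid0.eventually (eventually_le_nhds hδ)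
    have evδ2 : ∀ᶠ t in 𝓝[>] (0:ℝ), a * t ≤ δ :=
      (hat.mono_right nhdsWithin_le_nhds).eventually (eventually_le_nhds hδ)
    have evρ1 : ∀ᶠ t in 𝓝[>] (0:ℝ), ρ t ≤ D₁ := hρ0.eventually (eventually_le_nhds hD₁)
    have evρ2 : ∀ᶠ t in 𝓝[>] (0:ℝ), ρ (a*t) ≤ D₁ := hρa0.eventually (eventually_le_nhds hD₁)
    have evh : ∀ᶠ t in 𝓝[>] (0:ℝ), L/2 ≤ D₂ * (t/ρ t) - D₁ * (t/ρ (a*t)) :=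
      hh.eventually (eventually_ge_nhds (half_lt_self hLpos))
    have evr : ∀ᶠ t in 𝓝[>] (0:ℝ), (1:ℝ)/4 ≤ ρ (a*t) / ρ t :=
      hr.eventually (eventually_ge_nhds (by linarith))
    set K : ℝ := C₁ * D₂ / (8 * C₂ * D₁) with hKdef
    have hKpos : 0 < K := by positivity
    -- the main eventual inequality
    have main : ∀ᶠ t in 𝓝[>] (0:ℝ),
        K * Real.exp (L/2 * t⁻¹) ≤ F (a * t) / F t := by
      filter_upwards [ev1, evδ1, evδ2, evρ1, evρ2, evh, evr]
        with t ht htδ hatδ hρ1 hρ2 hht hrt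
      have ht0 : (0:ℝ) < t := ht
      have hat0 : (0:ℝ) < a * t := mul_pos ha0 ht0
      set u : ℝ := ρ t with hu
      set v : ℝ := ρ (a*t) with hv
      have hu0 : 0 < u := hρ_pos t ht0
      have hv0 : 0 < v := hρ_pos (a*t) hat0
      obtain ⟨hlow_t, hup_t⟩ := hbound t ⟨ht0.le, htδ⟩
      obtain ⟨hlow_at, hup_at⟩ := hbound (a*t) ⟨hat0.le, hatδ⟩
      -- bounds
      have hFt_ub : F t ≤ C₂ * (Real.sqrt u / D₂ * Real.exp (-(D₂/u))) :=
        hup_t.trans (by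
          apply mul_le_mul_of_nonneg_left (int_ub hD₂ hu0) hC₂.le)
      have hFt_lb : C₁ * (Real.sqrt u / (4*D₁) * Real.exp (-(D₁/u))) ≤ F t :=
        le_trans (mul_le_mul_of_nonneg_left (int_lb hD₁ hu0 hρ1) hC₁.le) hlow_t
      have hFat_lb : C₁ * (Real.sqrt v / (4*D₁) * Real.exp (-(D₁/v))) ≤ F (a*t) :=
        le_trans (mul_le_mul_of_nonneg_left (int_lb hD₁ hv0 hρ2) hC₁.le) hlow_at
      have hFt_pos : 0 < F t := lt_of_lt_of_le (by positivity) hFt_lb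
      set A : ℝ := C₁ * (Real.sqrt v / (4*D₁) * Real.exp (-(D₁/v))) with hA
      set B : ℝ := C₂ * (Real.sqrt u / D₂ * Real.exp (-(D₂/u))) with hB
      have hApos : 0 < A := by positivity
      have hBpos : 0 < B := by positivity
      have hdiv : A / B ≤ F (a*t) / F t :=
        div_le_div₀ (lt_of_lt_of_le hApos hFat_lb).le hFat_lb hFt_pos hFt_ub
      refine le_trans ?_ hdiv
      -- rewrite A / B
      have hAB : A / B = (C₁ * D₂ / (4 * C₂ * D₁)) * (Real.sqrt v / Real.sqrt u)
          * Real.exp (D₂/u - D₁/v) := by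
        rw [hA, hB, Real.exp_sub, Real.exp_neg (D₁/v), Real.exp_neg (D₂/u)]
        have h1 : Real.sqrt u ≠ 0 := (Real.sqrt_pos.mpr hu0).ne'
        have h2 : Real.exp (D₁/v) ≠ 0 := (Real.exp_pos _).ne'
        have h3 : Real.exp (D₂/u) ≠ 0 := (Real.exp_pos _).ne'
        field_simp
      rw [hAB]
      -- sqrt ratio bound
      have hsq : (1:ℝ)/2 ≤ Real.sqrt v / Real.sqrt u := by
        have h1 : Real.sqrt (v/u) = Real.sqrt v / Real.sqrt u := Real.sqrt_div hv0.le u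
        have h2 : Real.sqrt ((1:ℝ)/4) ≤ Real.sqrt (v/u) := Real.sqrt_le_sqrt hrt
        have h3 : Real.sqrt ((1:ℝ)/4) = 1/2 := by
          rw [show (1/4:ℝ) = (1/2)^2 by norm_num, Real.sqrt_sq (by norm_num)]
        rw [← h1]
        linarith
      -- exponent bound
      have hexp : L/2 * t⁻¹ ≤ D₂/u - D₁/v := by
        have heq : (D₂ * (t/u) - D₁ * (t/v)) / t = D₂/u - D₁/v := by
          field_simp
        rw [← heq, div_eq_mul_inv (D₂ * (t/u) - D₁ * (t/v)) t]
        exact mul_le_mul_of_nonneg_right hht (by positivity)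
      calc K * Real.exp (L/2 * t⁻¹)
          = (C₁ * D₂ / (4 * C₂ * D₁)) * (1/2) * Real.exp (L/2 * t⁻¹) := by
            rw [hKdef]; field_simp; ring
        _ ≤ (C₁ * D₂ / (4 * C₂ * D₁)) * (Real.sqrt v / Real.sqrt u)
              * Real.exp (D₂/u - D₁/v) := by
            apply mul_le_mul (mul_le_mul_of_nonneg_left hsq (by positivity))
              (Real.exp_le_exp.mpr hexp) (Real.exp_pos _).le (by positivity)
    -- conclusion
    have hφ : Tendsto (fun t : ℝ => K * Real.exp (L/2 * t⁻¹)) (𝓝[>] 0) atTop := by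
      apply Tendsto.const_mul_atTop hKpos
      apply Real.tendsto_exp_atTop.comp
      exact Tendsto.const_mul_atTop (half_pos hLpos) tendsto_inv_nhdsGT_zero
    exact tendsto_atTop_mono' _ main hφ
  constructor
  · rintro ⟨β, hβ⟩
    set a : ℝ := max 1 (D₁/D₂) + 1 with hadef
    have ha : max 1 (D₁/D₂) < a := lt_add_one _
    have ha0 : (0:ℝ) < a := lt_of_lt_of_le one_pos (by
      rw [hadef]; have := le_max_left (1:ℝ) (D₁/D₂); linarith)
    exact not_tendsto_atTop_of_tendsto_nhds (hβ a ha0) (key a ha)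
  · exact key
end

section
/- Let ρ : [0,∞) → [0,∞) be strictly increasing, differentiable on (0,∞), satisfying (R1) ρ(0)=0, (R2) lim_{t→0⁺} ρ(t)/t = l₁ > 0, (R3) lim_{t→0⁺}(ρ(t)−l₁t)/t² = l₂ ∈ ℝ. Let F : [0,δ] → [0,∞) and suppose there are positive constants δ, C₁, C₂, D₁, D₂ such that for all t ∈ [0,δ]: C₁ ∫₀^{ρ(t)} s^{−3/2} e^{−D₁/s} ds ≤ F(t) ≤ C₂ ∫₀^{ρ(t)} s^{−3/2} e^{−D₂/s} ds. Then F is rapidly decreasing at 0⁺: for every α > 0, lim_{t→0⁺} F(t)/t^α = 0. -/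
open Filter Topology Set MeasureTheory

/-- Key integral estimate: the integral of `s^{-3/2} e^{-D/s}` over `(0,a)` is at most
`(k! / D^k) * a^(k - 1/2) / (k - 1/2)` for any natural `k ≥ 1`. -/
lemma integral_bound_aux (D a : ℝ) (hD : 0 < D) (ha : 0 ≤ a) (k : ℕ) (hk : 1 ≤ k) :
    (∫ s in Ioo 0 a, s ^ (-(3:ℝ)/2) * Real.exp (-(D / s)))
      ≤ (k.factorial / D ^ k) * (a ^ ((k:ℝ) - 1/2) / ((k:ℝ) - 1/2)) := by
  set p : ℝ := (k:ℝ) - 3/2 with hp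
  have hk1 : (1:ℝ) ≤ (k:ℝ) := by exact_mod_cast hk
  have hp1 : (-1:ℝ) < p := by simp only [hp]; linarith
  have hM : (0:ℝ) < k.factorial / D ^ k := by positivity
  -- pointwise bound on Ioo 0 a
  have hpt : ∀ s ∈ Ioo (0:ℝ) a,
      s ^ (-(3:ℝ)/2) * Real.exp (-(D / s)) ≤ (k.factorial / D ^ k) * s ^ p := by
    intro s hs
    have hs0 : 0 < s := hs.1
    have hx : 0 < D / s := div_pos hD hs0
    have hexp : Real.exp (-(D / s)) ≤ k.factorial * s ^ k / D ^ k := by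
      have h1 : (D / s) ^ k / k.factorial ≤ Real.exp (D / s) :=
        Real.pow_div_factorial_le_exp (D / s) hx.le k
      have hbase : (0:ℝ) < (D / s) ^ k / k.factorial := by positivity
      have h2 : (Real.exp (D / s))⁻¹ ≤ ((D / s) ^ k / k.factorial)⁻¹ :=
        inv_anti₀ hbase h1
      rw [Real.exp_neg]
      refine h2.trans_eq ?_
      rw [div_pow]
      field_simp
    calc s ^ (-(3:ℝ)/2) * Real.exp (-(D / s))
        ≤ s ^ (-(3:ℝ)/2) * (k.factorial * s ^ k / D ^ k) :=
          mul_le_mul_of_nonneg_left hexp (Real.rpow_nonneg hs0.le _)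
      _ = (k.factorial / D ^ k) * s ^ p := by
          rw [hp, show ((k:ℝ) - 3/2) = -(3:ℝ)/2 + (k:ℝ) by ring,
            Real.rpow_add hs0, Real.rpow_natCast]
          ring
  -- integrability of the dominating function on Ioo 0 a
  have hint_p : IntegrableOn (fun s : ℝ => s ^ p) (Ioo 0 a) volume := by
    have := (intervalIntegral.intervalIntegrable_rpow' (a := 0) (b := a) hp1)
    rwa [intervalIntegrable_iff_integrableOn_Ioo_of_le ha] at this
  have hint_h : IntegrableOn (fun s : ℝ => (k.factorial / D ^ k) * s ^ p) (Ioo 0 a) volume :=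
    hint_p.const_mul _
  -- a.e. strong measurability of the integrand
  have hmeas : AEStronglyMeasurable (fun s : ℝ => s ^ (-(3:ℝ)/2) * Real.exp (-(D / s)))
      (volume.restrict (Ioo 0 a)) := by
    apply ContinuousOn.aestronglyMeasurable _ measurableSet_Ioo
    intro s hs
    have hs0 : s ≠ 0 := ne_of_gt hs.1
    apply ContinuousWithinAt.mul
    · exact (Real.continuousAt_rpow_const s _ (Or.inl hs0)).continuousWithinAt
    · exact (Real.continuous_exp.continuousAt.comp
        ((continuousAt_const.div continuousAt_id hs0).neg)).continuousWithinAt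
  -- integrability of the integrand
  have hint_g : IntegrableOn (fun s => s ^ (-(3:ℝ)/2) * Real.exp (-(D/s))) (Ioo 0 a) volume := by
    apply Integrable.mono' hint_h hmeas
    filter_upwards [ae_restrict_mem measurableSet_Ioo] with s hs
    rw [Real.norm_eq_abs, abs_of_nonneg
      (mul_nonneg (Real.rpow_nonneg hs.1.le _) (Real.exp_pos _).le)]
    exact hpt s hs
  have hppos : (0:ℝ) < p + 1 := by linarith
  have hpne : p + 1 ≠ 0 := hppos.ne'
  calc (∫ s in Ioo 0 a, s ^ (-(3:ℝ)/2) * Real.exp (-(D / s)))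
      ≤ ∫ s in Ioo 0 a, (k.factorial / D ^ k) * s ^ p :=
        setIntegral_mono_on hint_g hint_h measurableSet_Ioo hpt
    _ = (k.factorial / D ^ k) * ∫ s in Ioo 0 a, s ^ p := by rw [integral_const_mul]
    _ = (k.factorial / D ^ k) * (a ^ ((k:ℝ) - 1/2) / ((k:ℝ) - 1/2)) := by
        congr 1
        rw [← integral_Ioc_eq_integral_Ioo, ← intervalIntegral.integral_of_le ha,
          integral_rpow (Or.inl hp1), Real.zero_rpow hpne]
        rw [show p + 1 = (k:ℝ) - 1/2 by simp only [hp]; ring]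
        ring

/-- If `ρ` satisfies (R1)–(R3) and `F` satisfies the two-sided bound
`C₁ ∫₀^{ρ(t)} s^{-3/2} e^{-D₁/s} ds ≤ F(t) ≤ C₂ ∫₀^{ρ(t)} s^{-3/2} e^{-D₂/s} ds`
on `[0,δ]`, then `F` is rapidly decreasing at `0⁺`: for every `α > 0`,
`F(t)/t^α → 0` as `t → 0⁺`. -/
theorem rapidly_decreasing_of_two_sided_bound
    (ρ : ℝ → ℝ)
    (hmono : StrictMonoOn ρ (Ici 0))
    (hρ_nonneg : ∀ t, 0 ≤ t → 0 ≤ ρ t)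
    (hdiff : DifferentiableOn ℝ ρ (Ioi 0))
    (hR1 : ρ 0 = 0)
    (l₁ l₂ : ℝ) (hl₁ : 0 < l₁)
    (hR2 : Tendsto (fun t => ρ t / t) (𝓝[>] 0) (𝓝 l₁))
    (hR3 : Tendsto (fun t => (ρ t - l₁ * t) / t ^ 2) (𝓝[>] 0) (𝓝 l₂))
    (F : ℝ → ℝ) (δ C₁ C₂ D₁ D₂ : ℝ)
    (hδ : 0 < δ) (hC₁ : 0 < C₁) (hC₂ : 0 < C₂) (hD₁ : 0 < D₁) (hD₂ : 0 < D₂)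
    (hbound : ∀ t ∈ Icc (0:ℝ) δ,
      C₁ * (∫ s in Ioo 0 (ρ t), s ^ (-(3:ℝ)/2) * Real.exp (-(D₁ / s))) ≤ F t ∧
      F t ≤ C₂ * (∫ s in Ioo 0 (ρ t), s ^ (-(3:ℝ)/2) * Real.exp (-(D₂ / s)))) :
    ∀ α > (0:ℝ), Tendsto (fun t => F t / t ^ α) (𝓝[>] 0) (𝓝 0) := by
  intro α hα
  set k : ℕ := ⌈α⌉₊ + 1 with hkdef
  have hk1 : 1 ≤ k := Nat.le_add_left 1 _
  have hkR : (1:ℝ) ≤ (k:ℝ) := by exact_mod_cast hk1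
  have hkα : α < (k:ℝ) - 1/2 := by
    have h1 : α ≤ (⌈α⌉₊ : ℝ) := Nat.le_ceil α
    have h2 : (k:ℝ) = (⌈α⌉₊:ℝ) + 1 := by rw [hkdef]; push_cast; ring
    linarith
  set β : ℝ := (k:ℝ) - 1/2 - α with hβdef
  have hβpos : 0 < β := by simp only [hβdef]; linarith
  set M : ℝ := k.factorial / D₂ ^ k with hMdef
  have hMpos : 0 < M := by positivity
  set K : ℝ := C₂ * (M * ((2*l₁) ^ ((k:ℝ)-1/2) / ((k:ℝ)-1/2))) with hKdef
  -- eventual facts near 0⁺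
  have hev1 : ∀ᶠ t in 𝓝[>] (0:ℝ), ρ t / t < 2 * l₁ :=
    hR2.eventually (gt_mem_nhds (by linarith : l₁ < 2 * l₁))
  have hev2 : Ioo (0:ℝ) δ ∈ 𝓝[>] (0:ℝ) :=
    Ioo_mem_nhdsGT_of_mem ⟨le_refl 0, hδ⟩
  have hnn : ∀ᶠ t in 𝓝[>] (0:ℝ), 0 ≤ F t / t ^ α := by
    filter_upwards [hev2] with t ht
    have hFt : 0 ≤ F t := by
      refine le_trans ?_ (hbound t ⟨ht.1.le, ht.2.le⟩).1
      apply mul_nonneg hC₁.le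
      apply setIntegral_nonneg measurableSet_Ioo
      intro s hs
      exact mul_nonneg (Real.rpow_nonneg hs.1.le _) (Real.exp_pos _).le
    exact div_nonneg hFt (Real.rpow_nonneg ht.1.le _)
  have hub : ∀ᶠ t in 𝓝[>] (0:ℝ), F t / t ^ α ≤ K * t ^ β := by
    filter_upwards [hev1, hev2] with t hρt ht
    have ht0 : 0 < t := ht.1
    have hρle : ρ t ≤ 2 * l₁ * t := by
      rw [div_lt_iff₀ ht0] at hρt
      linarith
    have hρnn : 0 ≤ ρ t := hρ_nonneg t ht0.le
    have h2 : F t ≤ K * t ^ ((k:ℝ) - 1/2) := by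
      have hint := integral_bound_aux D₂ (ρ t) hD₂ hρnn k hk1
      have hpow : ρ t ^ ((k:ℝ) - 1/2) ≤ (2*l₁) ^ ((k:ℝ)-1/2) * t ^ ((k:ℝ)-1/2) := by
        rw [← Real.mul_rpow (by positivity) ht0.le]
        exact Real.rpow_le_rpow hρnn hρle (by linarith)
      have hden : (0:ℝ) < (k:ℝ) - 1/2 := by linarith
      calc F t ≤ C₂ * (∫ s in Ioo 0 (ρ t), s ^ (-(3:ℝ)/2) * Real.exp (-(D₂ / s))) :=
            (hbound t ⟨ht0.le, ht.2.le⟩).2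
        _ ≤ C₂ * (M * (ρ t ^ ((k:ℝ) - 1/2) / ((k:ℝ) - 1/2))) := by
            apply mul_le_mul_of_nonneg_left _ hC₂.le
            rw [hMdef]; exact hint
        _ ≤ C₂ * (M * (((2*l₁) ^ ((k:ℝ)-1/2) * t ^ ((k:ℝ)-1/2)) / ((k:ℝ) - 1/2))) := by
            apply mul_le_mul_of_nonneg_left _ hC₂.le
            apply mul_le_mul_of_nonneg_left _ hMpos.le
            gcongr
        _ = K * t ^ ((k:ℝ) - 1/2) := by rw [hKdef]; ring
    have htα : 0 < t ^ α := Real.rpow_pos_of_pos ht0 α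
    calc F t / t ^ α ≤ (K * t ^ ((k:ℝ) - 1/2)) / t ^ α := by gcongr
      _ = K * t ^ β := by
          rw [mul_div_assoc, ← Real.rpow_sub ht0, hβdef]
  have hg : Tendsto (fun t : ℝ => K * t ^ β) (𝓝[>] 0) (𝓝 0) := by
    have h1 : Tendsto (fun t : ℝ => t ^ β) (𝓝[>] (0:ℝ)) (𝓝 0) := by
      have := (Real.continuousAt_rpow_const 0 β (Or.inr hβpos.le)).tendsto
      rw [Real.zero_rpow hβpos.ne'] at this
      exact this.mono_left nhdsWithin_le_nhds
    have := h1.const_mul K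
    rwa [mul_zero] at this
  exact squeeze_zero' hnn hub hg
end
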